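/- The 𝒯-module M_t(λ, α) is simple if and only if α ≠ 0. Moreover, when α = 0, the subspace Υ_t = ∂²·ℂ[∂²] ⊕ ∂·ℂ[∂²] is the unique proper nonzero submodule of M_t(λ, 0), and the quotient M_t(λ, 0)/Υ_t is a one-dimensional trivial 𝒯-module. -/

import Mathlib

open Polynomial

/- The module `M_t(λ, α) = ℂ[∂²] ⊕ ∂ℂ[∂²]` is encoded as pairs `(f, g)` of
polynomials (in the variable `∂²`), `(f, g) ↔ f(∂²) + ∂ g(∂²)`.  Half-integer
indices `p ∈ (1/2)ℤ`, `r ∈ 1/2 + ℤ` are encoded by their doubles `a = 2p` (with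
`a` odd for `r`); `λ = ν²` for a fixed square root `ν`, so `λ^p = ν^a`. -/

/-- The action of `L_m` on `M_t(λ,α)`. -/
noncomputable def MLop (nu α : ℂ) (m : ℤ) (v : Polynomial ℂ × Polynomial ℂ) :
    Polynomial ℂ × Polynomial ℂ :=
  (nu ^ (2 * m) • ((X + C ((m : ℂ) * α)) * v.1.comp (X + C (m : ℂ))),
   nu ^ (2 * m) • ((X + C ((m : ℂ) * (α + 1/2))) * v.2.comp (X + C (m : ℂ))))

/-- The action of `I_r` (`r = a/2`, `a` odd) on `M_t(λ,α)`. -/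
noncomputable def MIop (t nu α : ℂ) (a : ℤ) (v : Polynomial ℂ × Polynomial ℂ) :
    Polynomial ℂ × Polynomial ℂ :=
  ((-2 * t ^ a * nu ^ a * α) • v.1.comp (X + C ((a : ℂ) / 2)),
   (t ^ a * nu ^ a * (1 - 2 * α)) • v.2.comp (X + C ((a : ℂ) / 2)))

/-- The action of `G_p` (`p = a/2`) on `M_t(λ,α)`. -/
noncomputable def MGop (t nu α : ℂ) (a : ℤ) (v : Polynomial ℂ × Polynomial ℂ) :
    Polynomial ℂ × Polynomial ℂ :=
  (((-t) ^ a * nu ^ a) • ((X + C ((a : ℂ) * α)) * v.2.comp (X + C ((a : ℂ) / 2))),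
   (t ^ a * nu ^ a) • v.1.comp (X + C ((a : ℂ) / 2)))

/-- A (graded) 𝒯-submodule of `M_t(λ,α)`. -/
def IsTSub (t nu α : ℂ) (N : Submodule ℂ (Polynomial ℂ × Polynomial ℂ)) : Prop :=
  (∀ v ∈ N, ((v.1, 0) : Polynomial ℂ × Polynomial ℂ) ∈ N) ∧
  (∀ m : ℤ, ∀ v ∈ N, MLop nu α m v ∈ N) ∧
  (∀ a : ℤ, Odd a → ∀ v ∈ N, MIop t nu α a v ∈ N) ∧
  (∀ a : ℤ, ∀ v ∈ N, MGop t nu α a v ∈ N)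

/-- `Υ_t = ∂²ℂ[∂²] ⊕ ∂ℂ[∂²]`: pairs whose first component has zero constant term. -/
noncomputable def Upsilon : Submodule ℂ (Polynomial ℂ × Polynomial ℂ) :=
  (LinearMap.ker (lcoeff ℂ 0)).prod ⊤

/-!
A 𝒯-submodule `N` is graded, so it is determined by its even part `N ∩ ℂ[∂²]` and odd part
`{g | ∂g ∈ N}`, two subspaces of `ℂ[∂²]`. Both are stable under multiplication by `∂²` (the
action of `L_0`), and `G_0` maps the even part into the odd part. The operator `I_{1/2}` acts on
the even part as `-2tλ^{1/2}α` times the shift `f(∂²) ↦ f(∂² + 1/2)`, and on the odd part as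
`tλ^{1/2}(1 - 2α)` times the same shift. A nonzero subspace of a polynomial ring in characteristic
zero that is stable under multiplication by the variable and under a nonzero shift is the whole
ring, because finite differences lower the degree until a nonzero constant is reached.
Hence, for `α ≠ 0`, every nonzero `N` is the whole module. For `α = 0`, the odd part of a nonzero
`N` is all of `ℂ[∂²]`. Then `G_0` puts `∂²ℂ[∂²]` into the even part, so `N ⊇ Υ_t`, and `Υ_t` is
the kernel of the constant-term functional, so it has codimension one.
-/

namespace Polynomial

variable {K : Type*} [Field K]

theorem natDegree_comp_X_add_C_sub_lt {f : K[X]} (s : K) (hf : 0 < f.natDegree) :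
    (f.comp (X + C s) - f).natDegree < f.natDegree := by
  have hf0 : f ≠ 0 := ne_zero_of_natDegree_gt hf
  have hcomp0 : f.comp (X + C s) ≠ 0 := comp_X_add_C_ne_zero_iff.mpr hf0
  by_cases hsub : f.comp (X + C s) - f = 0
  · rwa [hsub, natDegree_zero]
  have hnat : (f.comp (X + C s)).natDegree = f.natDegree := by
    rw [natDegree_comp, natDegree_X_add_C, mul_one]
  have hdeg : (f.comp (X + C s)).degree = f.degree := by
    rw [degree_eq_natDegree hcomp0, degree_eq_natDegree hf0, hnat]
  have hlc : (f.comp (X + C s)).leadingCoeff = f.leadingCoeff := by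
    rw [leadingCoeff_comp (by rw [natDegree_X_add_C]; exact one_ne_zero), leadingCoeff_X_add_C,
      one_pow, mul_one]
  exact hnat ▸ natDegree_lt_natDegree hsub (degree_sub_lt_left hdeg hcomp0 hlc)

variable [CharZero K]

theorem eq_C_of_comp_X_add_C_eq {f : K[X]} {s : K} (hs : s ≠ 0) (h : f.comp (X + C s) = f) :
    f = C (f.eval 0) := by
  have periodic : Function.Periodic f.eval s := fun x => by
    simpa using congrArg (eval x) h
  refine sub_eq_zero.mp (eq_zero_of_infinite_isRoot _ ?_)
  refine Set.infinite_of_injective_forall_mem (f := fun n : ℕ => (n : K) * s) ?_ ?_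
  · exact fun m n hmn => by exact_mod_cast mul_right_cancel₀ hs hmn
  · exact fun n => by simp [periodic.nat_mul_eq n]

end Polynomial

namespace Submodule

open Polynomial

variable {K : Type*} [Field K]

theorem eq_top_of_X_mul_mem {J : Submodule K K[X]} (hX : ∀ f ∈ J, X * f ∈ J) {c : K}
    (hc : c ≠ 0) (hcJ : C c ∈ J) : J = ⊤ := by
  have hone : (1 : K[X]) ∈ J := by
    simpa [smul_C, inv_mul_cancel₀ hc] using J.smul_mem c⁻¹ hcJ
  refine eq_top_iff'.mpr fun p => ?_
  induction p using Polynomial.induction_on with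
  | C a => simpa [smul_eq_C_mul] using J.smul_mem a hone
  | add p q hp hq => exact J.add_mem hp hq
  | monomial n a ih => convert hX _ ih using 1; ring

variable [CharZero K]

theorem exists_C_mem_of_comp_X_add_C_mem {J : Submodule K K[X]} {s : K} (hs : s ≠ 0)
    (hshift : ∀ f ∈ J, f.comp (X + C s) ∈ J) {f : K[X]} (hf : f ∈ J) (hf0 : f ≠ 0) :
    ∃ c ≠ 0, C c ∈ J := by
  induction hn : f.natDegree using Nat.strong_induction_on generalizing f with
  | _ n ih =>
    rcases Nat.eq_zero_or_pos f.natDegree with hdeg | hdeg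
    · rw [eq_C_of_natDegree_eq_zero hdeg] at hf hf0
      exact ⟨f.coeff 0, fun h => hf0 (by rw [h, map_zero]), hf⟩
    · have hsub0 : f.comp (X + C s) - f ≠ 0 := fun h =>
        (eq_C_of_comp_X_add_C_eq hs (sub_eq_zero.mp h) ▸ hdeg.ne') (natDegree_C _)
      exact ih _ (hn ▸ natDegree_comp_X_add_C_sub_lt s hdeg) (J.sub_mem (hshift f hf) hf)
        hsub0 rfl

theorem eq_top_of_comp_X_add_C_mem {J : Submodule K K[X]} {s : K} (hs : s ≠ 0)
    (hshift : ∀ f ∈ J, f.comp (X + C s) ∈ J) (hX : ∀ f ∈ J, X * f ∈ J) (hJ : J ≠ ⊥) :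
    J = ⊤ := by
  obtain ⟨f, hf, hf0⟩ := J.ne_bot_iff.mp hJ
  obtain ⟨c, hc, hcJ⟩ := exists_C_mem_of_comp_X_add_C_mem hs hshift hf hf0
  exact eq_top_of_X_mul_mem hX hc hcJ

end Submodule

noncomputable def evenPart (N : Submodule ℂ (ℂ[X] × ℂ[X])) : Submodule ℂ ℂ[X] :=
  N.comap (LinearMap.inl ℂ _ _)

noncomputable def oddPart (N : Submodule ℂ (ℂ[X] × ℂ[X])) : Submodule ℂ ℂ[X] :=
  N.comap (LinearMap.inr ℂ _ _)

@[simp]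
theorem mem_evenPart {N : Submodule ℂ (ℂ[X] × ℂ[X])} {f : ℂ[X]} :
    f ∈ evenPart N ↔ (f, 0) ∈ N := Iff.rfl

@[simp]
theorem mem_oddPart {N : Submodule ℂ (ℂ[X] × ℂ[X])} {g : ℂ[X]} :
    g ∈ oddPart N ↔ (0, g) ∈ N := Iff.rfl

theorem MLop_zero (nu α : ℂ) (v : ℂ[X] × ℂ[X]) : MLop nu α 0 v = (X * v.1, X * v.2) := by
  simp [MLop]

theorem MGop_zero (t nu α : ℂ) (v : ℂ[X] × ℂ[X]) : MGop t nu α 0 v = (X * v.2, v.1) := by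
  simp [MGop]

theorem MIop_one_inl (t nu α : ℂ) (f : ℂ[X]) :
    MIop t nu α 1 (f, 0) = ((-2 * t * nu * α) • f.comp (X + C (1 / 2)), 0) := by
  simp [MIop]

theorem MIop_one_inr (t nu α : ℂ) (g : ℂ[X]) :
    MIop t nu α 1 (0, g) = (0, (t * nu * (1 - 2 * α)) • g.comp (X + C (1 / 2))) := by
  simp [MIop]

namespace IsTSub

variable {t nu α : ℂ} {N : Submodule ℂ (ℂ[X] × ℂ[X])}

theorem X_mul_mem_evenPart (hN : IsTSub t nu α N) {f : ℂ[X]} (hf : f ∈ evenPart N) :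
    X * f ∈ evenPart N := by
  simpa [MLop_zero] using hN.2.1 0 _ hf

theorem X_mul_mem_oddPart (hN : IsTSub t nu α N) {g : ℂ[X]} (hg : g ∈ oddPart N) :
    X * g ∈ oddPart N := by
  simpa [MLop_zero] using hN.2.1 0 _ hg

theorem X_mul_mem_evenPart_of_mem_oddPart (hN : IsTSub t nu α N) {g : ℂ[X]}
    (hg : g ∈ oddPart N) : X * g ∈ evenPart N := by
  simpa [MGop_zero] using hN.2.2.2 0 _ hg

theorem evenPart_le_oddPart (hN : IsTSub t nu α N) : evenPart N ≤ oddPart N := fun f hf => by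
  simpa [MGop_zero] using hN.2.2.2 0 _ hf

theorem evenPart_ne_bot (hN : IsTSub t nu α N) (hbot : N ≠ ⊥) : evenPart N ≠ ⊥ := by
  obtain ⟨v, hv, hv0⟩ := N.ne_bot_iff.mp hbot
  rw [Submodule.ne_bot_iff]
  by_cases h1 : v.1 = 0
  · have h2 : v.2 ≠ 0 := fun h2 => hv0 (Prod.ext h1 h2)
    exact ⟨X * v.2, by simpa [MGop_zero] using hN.1 _ (hN.2.2.2 0 v hv),
      mul_ne_zero X_ne_zero h2⟩
  · exact ⟨v.1, hN.1 v hv, h1⟩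

theorem evenPart_eq_top (hN : IsTSub t nu α N) (hc : t * nu * α ≠ 0) (hbot : N ≠ ⊥) :
    evenPart N = ⊤ := by
  refine Submodule.eq_top_of_comp_X_add_C_mem (one_div_ne_zero two_ne_zero) (fun f hf => ?_)
    (fun f => hN.X_mul_mem_evenPart) (hN.evenPart_ne_bot hbot)
  have hI := hN.2.2.1 1 odd_one (f, 0) hf
  rw [MIop_one_inl] at hI
  have hc' : -2 * t * nu * α ≠ 0 := by
    simpa [mul_assoc] using mul_ne_zero (neg_ne_zero.mpr two_ne_zero) hc
  exact ((evenPart N).smul_mem_iff hc').mp hI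

theorem oddPart_eq_top (hN : IsTSub t nu α N) (hc : t * nu * (1 - 2 * α) ≠ 0) (hbot : N ≠ ⊥) :
    oddPart N = ⊤ := by
  refine Submodule.eq_top_of_comp_X_add_C_mem (one_div_ne_zero two_ne_zero) (fun g hg => ?_)
    (fun g => hN.X_mul_mem_oddPart) ?_
  · have hI := hN.2.2.1 1 odd_one (0, g) hg
    rw [MIop_one_inr] at hI
    exact ((oddPart N).smul_mem_iff hc).mp hI
  · exact fun h => hN.evenPart_ne_bot hbot (eq_bot_iff.mpr (h ▸ hN.evenPart_le_oddPart))

theorem eq_top (hN : IsTSub t nu α N) (hc : t * nu * α ≠ 0) (hbot : N ≠ ⊥) : N = ⊤ := by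
  have heven := hN.evenPart_eq_top hc hbot
  have hodd : oddPart N = ⊤ := top_le_iff.mp (heven ▸ hN.evenPart_le_oddPart)
  refine Submodule.eq_top_iff'.mpr fun v => ?_
  simpa using N.add_mem (mem_evenPart.mp (heven ▸ trivial : v.1 ∈ evenPart N))
    (mem_oddPart.mp (hodd ▸ trivial : v.2 ∈ oddPart N))

end IsTSub

noncomputable def constTerm : ℂ[X] × ℂ[X] →ₗ[ℂ] ℂ :=
  (lcoeff ℂ 0).comp (LinearMap.fst ℂ _ _)

theorem mem_Upsilon {v : ℂ[X] × ℂ[X]} : v ∈ Upsilon ↔ v.1.coeff 0 = 0 := by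
  simp [Upsilon, Submodule.mem_prod]

theorem Upsilon_eq_ker_constTerm : Upsilon = LinearMap.ker constTerm := by
  ext v
  simp [mem_Upsilon, constTerm]

theorem constTerm_surjective : Function.Surjective constTerm :=
  fun c => ⟨(C c, 0), by simp [constTerm]⟩

theorem isCoatom_Upsilon : IsCoatom Upsilon :=
  Upsilon_eq_ker_constTerm ▸ LinearMap.isCoatom_ker_of_surjective constTerm_surjective

theorem finrank_quotient_Upsilon : Module.finrank ℂ ((ℂ[X] × ℂ[X]) ⧸ Upsilon) = 1 := by
  rw [Upsilon_eq_ker_constTerm,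
    (LinearMap.quotKerEquivOfSurjective _ constTerm_surjective).finrank_eq, Module.finrank_self]

theorem Upsilon_ne_bot : Upsilon ≠ ⊥ :=
  (Submodule.ne_bot_iff _).mpr ⟨(X, 0), mem_Upsilon.mpr (by simp), by simp [X_ne_zero]⟩

theorem MLop_mem_Upsilon (nu : ℂ) (m : ℤ) (v : ℂ[X] × ℂ[X]) : MLop nu 0 m v ∈ Upsilon := by
  simp [mem_Upsilon, MLop, mul_coeff_zero]

theorem MIop_mem_Upsilon (t nu : ℂ) (a : ℤ) (v : ℂ[X] × ℂ[X]) : MIop t nu 0 a v ∈ Upsilon := by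
  simp [mem_Upsilon, MIop]

theorem MGop_mem_Upsilon (t nu : ℂ) (a : ℤ) (v : ℂ[X] × ℂ[X]) : MGop t nu 0 a v ∈ Upsilon := by
  simp [mem_Upsilon, MGop, mul_coeff_zero]

theorem isTSub_Upsilon (t nu : ℂ) : IsTSub t nu 0 Upsilon :=
  ⟨fun _ hv => mem_Upsilon.mpr (mem_Upsilon.mp hv), fun m v _ => MLop_mem_Upsilon nu m v,
    fun a _ v _ => MIop_mem_Upsilon t nu a v, fun a v _ => MGop_mem_Upsilon t nu a v⟩

theorem IsTSub.Upsilon_le {t nu α : ℂ} {N : Submodule ℂ (ℂ[X] × ℂ[X])} (hN : IsTSub t nu α N)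
    (hodd : oddPart N = ⊤) : Upsilon ≤ N := by
  intro v hv
  have hv1 : X * v.1.divX = v.1 := by
    simpa [mem_Upsilon.mp hv] using X_mul_divX_add v.1
  have heven : v.1 ∈ evenPart N :=
    hv1 ▸ hN.X_mul_mem_evenPart_of_mem_oddPart (hodd ▸ trivial)
  simpa using N.add_mem (mem_evenPart.mp heven) (mem_oddPart.mp (hodd ▸ trivial : v.2 ∈ oddPart N))

/-- `M_t(λ,α)` is simple iff `α ≠ 0`; for `α = 0`, `Υ_t` is the unique proper nonzero
submodule, and the quotient is a one-dimensional trivial 𝒯-module. -/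
theorem stmt9 (t nu : ℂ) (ht : t = 1 ∨ t = -1) (hnu : nu ≠ 0) :
    (∀ α : ℂ,
      ((∀ N : Submodule ℂ (Polynomial ℂ × Polynomial ℂ),
          IsTSub t nu α N → N = ⊥ ∨ N = ⊤) ↔ α ≠ 0)) ∧
    IsTSub t nu 0 Upsilon ∧ Upsilon ≠ ⊥ ∧ Upsilon ≠ ⊤ ∧
    (∀ N : Submodule ℂ (Polynomial ℂ × Polynomial ℂ),
        IsTSub t nu 0 N → N ≠ ⊥ → N ≠ ⊤ → N = Upsilon) ∧
    Module.finrank ℂ ((Polynomial ℂ × Polynomial ℂ) ⧸ Upsilon) = 1 ∧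
    (∀ (m : ℤ) (v : Polynomial ℂ × Polynomial ℂ), MLop nu 0 m v ∈ Upsilon) ∧
    (∀ a : ℤ, Odd a → ∀ v : Polynomial ℂ × Polynomial ℂ, MIop t nu 0 a v ∈ Upsilon) ∧
    (∀ (a : ℤ) (v : Polynomial ℂ × Polynomial ℂ), MGop t nu 0 a v ∈ Upsilon) := by
  have htnu : t * nu ≠ 0 := mul_ne_zero (by rcases ht with rfl | rfl <;> norm_num) hnu
  have classify (N : Submodule ℂ (ℂ[X] × ℂ[X])) (hN : IsTSub t nu 0 N) (hbot : N ≠ ⊥)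
      (htop : N ≠ ⊤) : N = Upsilon :=
    (isCoatom_Upsilon.le_iff_eq htop).mp
      (hN.Upsilon_le (hN.oddPart_eq_top (by simpa using htnu) hbot))
  refine ⟨fun α => ⟨?_, ?_⟩, isTSub_Upsilon t nu, Upsilon_ne_bot, isCoatom_Upsilon.1, classify,
    finrank_quotient_Upsilon, MLop_mem_Upsilon nu, fun a _ => MIop_mem_Upsilon t nu a,
    MGop_mem_Upsilon t nu⟩
  · rintro hsimple rfl
    rcases hsimple Upsilon (isTSub_Upsilon t nu) with h | h
    exacts [Upsilon_ne_bot h, isCoatom_Upsilon.1 h]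
  · exact fun hα N hN => or_iff_not_imp_left.mpr (hN.eq_top (mul_ne_zero htnu hα))
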